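/- Let G be a group, H a finite index normal subgroup of G, and U a normal subgroup of H such that H/U is elementary amenable. Let U^G be the normal core of U in G. Then G/U^G is elementary amenable. -/

import Mathlib

/-!
Conjugating by representatives `q` of the cosets of `H` gives a homomorphism
`H → ∏_{q ∈ G/H} H/U`, `h ↦ (q⁻¹ h q · U)_q`, whose kernel lies in `U^G` because `U` is normal
in `H`. So the image of `H` in `G/U^G` is a quotient of a subgroup of a finite power of `H/U`,
hence elementary amenable; it has finite index, and a group with an elementary amenable subgroup
of finite index is elementary amenable (pass to the normal core of that subgroup).
-/

universe u

/-- The class of elementary amenable groups: the smallest class of groups containing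
all finite groups and all abelian groups, closed under subgroups, quotients,
extensions, and directed unions (and isomorphism). -/
inductive ElementaryAmenable : ∀ (G : Type u) [Group G], Prop
  | of_finite (G : Type u) [Group G] (h : Finite G) : ElementaryAmenable G
  | of_abelian (G : Type u) [Group G] (h : ∀ a b : G, a * b = b * a) : ElementaryAmenable G
  | of_subgroup (G : Type u) [Group G] (H : Subgroup G) (h : ElementaryAmenable G) :
      ElementaryAmenable H
  | of_quotient (G : Type u) [Group G] (N : Subgroup G) [N.Normal] (h : ElementaryAmenable G) :
      ElementaryAmenable (G ⧸ N)
  | of_extension (G : Type u) [Group G] (N : Subgroup G) [N.Normal]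
      (hN : ElementaryAmenable N) (hQ : ElementaryAmenable (G ⧸ N)) : ElementaryAmenable G
  | of_directedUnion (G : Type u) [Group G] (ι : Type u) (K : ι → Subgroup G)
      (hdir : Directed (· ≤ ·) K) (hsup : (⨆ i, K i) = ⊤)
      (h : ∀ i, ElementaryAmenable (K i)) : ElementaryAmenable G
  | of_mulEquiv (G H : Type u) [Group G] [Group H] (e : G ≃* H) (h : ElementaryAmenable G) :
      ElementaryAmenable H

/-- Old Mathlib definition (removed since): no nontrivial element has finite order. -/
def Monoid.IsTorsionFree (G : Type*) [Monoid G] : Prop :=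
  ∀ g : G, g ≠ 1 → ¬IsOfFinOrder g

/-- A group `H` has the factorization property if every homomorphism from `H` to a
finite group factors through a torsion-free elementary amenable group. -/
def HasFactorizationProperty (H : Type u) [Group H] : Prop :=
  ∀ (P : GrpCat.{u}), Finite P → ∀ f : H →* P,
    ∃ (M : GrpCat.{u}) (g : H →* M) (h : (M : Type u) →* P),
      Monoid.IsTorsionFree M ∧ ElementaryAmenable M ∧ h.comp g = f

namespace ElementaryAmenable

variable {G K L : Type u} [Group G] [Group K] [Group L]

theorem of_injective (f : G →* K) (hf : Function.Injective f) (hK : ElementaryAmenable K) :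
    ElementaryAmenable G :=
  .of_mulEquiv _ _ (MonoidHom.ofInjective hf).symm (.of_subgroup _ _ hK)

theorem of_surjective (f : G →* K) (hf : Function.Surjective f) (hG : ElementaryAmenable G) :
    ElementaryAmenable K :=
  .of_mulEquiv _ _ (QuotientGroup.quotientKerEquivOfSurjective f hf) (.of_quotient _ _ hG)

theorem prod (hK : ElementaryAmenable K) (hL : ElementaryAmenable L) :
    ElementaryAmenable (K × L) := by
  refine .of_extension _ (MonoidHom.snd K L).ker ?_ ?_
  · refine .of_injective ((MonoidHom.fst K L).comp (MonoidHom.snd K L).ker.subtype) ?_ hK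
    exact fun x y h => Subtype.ext (Prod.ext h (x.2.trans y.2.symm))
  · exact .of_injective _ (QuotientGroup.kerLift_injective _) hL

theorem pi {ι : Type u} [Finite ι] {Q : ι → Type u} [∀ i, Group (Q i)]
    (hQ : ∀ i, ElementaryAmenable (Q i)) : ElementaryAmenable (∀ i, Q i) := by
  induction ι using Finite.induction_empty_option with
  | of_equiv e ih =>
    refine .of_injective (MonoidHom.pi fun a => Pi.evalMonoidHom Q (e a)) ?_ (ih fun a => hQ (e a))
    intro x y h
    funext b
    obtain ⟨a, rfl⟩ := e.surjective b
    exact congr_fun h a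
  | h_empty => exact .of_finite _ inferInstance
  | h_option ih =>
    refine .of_injective ((Pi.evalMonoidHom Q none).prod
      (MonoidHom.pi fun a => Pi.evalMonoidHom Q (some a))) ?_
      ((hQ none).prod (ih fun a => hQ (some a)))
    intro x y h
    funext i
    cases i with
    | none => exact congr_arg Prod.fst h
    | some a => exact congr_fun (congr_arg Prod.snd h) a

theorem of_ker_le_ker (f : G →* K) (hK : ElementaryAmenable K) (g : G →* L)
    (hg : Function.Surjective g) (hfg : f.ker ≤ g.ker) : ElementaryAmenable L :=
  .of_surjective (QuotientGroup.lift f.ker g hfg)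
    (QuotientGroup.lift_surjective_of_surjective _ _ hg _)
    (.of_injective _ (QuotientGroup.kerLift_injective f) hK)

theorem of_finiteIndex (H : Subgroup G) [H.FiniteIndex] (hH : ElementaryAmenable H) :
    ElementaryAmenable G :=
  .of_extension _ H.normalCore
    (.of_injective _ (Subgroup.inclusion_injective H.normalCore_le) hH)
    (.of_finite _ inferInstance)

end ElementaryAmenable

theorem Subgroup.mem_normalCore_of_forall_conj_out_mem {G : Type*} [Group G]
    {H U : Subgroup G} [H.Normal] [hU : (U.subgroupOf H).Normal] {x : G} (hx : x ∈ H)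
    (hconj : ∀ q : G ⧸ H, q.out⁻¹ * x * q.out ∈ U) : x ∈ U.normalCore := by
  intro b
  obtain ⟨k, hk⟩ := QuotientGroup.mk_out_eq_mul H b⁻¹
  have hy : b * x * b⁻¹ ∈ H := ‹H.Normal›.conj_mem x hx b
  have hky : (k : G)⁻¹ * (b * x * b⁻¹) * k ∈ U := by
    have := hconj (QuotientGroup.mk b⁻¹)
    rwa [hk, show (b⁻¹ * k)⁻¹ * x * (b⁻¹ * k) = (k : G)⁻¹ * (b * x * b⁻¹) * k by group]
      at this
  simpa [Subgroup.mem_subgroupOf, mul_assoc] using hU.conj_mem (k⁻¹ * ⟨_, hy⟩ * k) hky k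

theorem quotient_normalCore_elementaryAmenable_general (G : Type u) [Group G] (H : Subgroup G)
    [H.Normal] [H.FiniteIndex] (U : Subgroup G)
    [hU : (U.subgroupOf H).Normal]
    (hEA : ElementaryAmenable ((H : Type u) ⧸ U.subgroupOf H)) :
    ElementaryAmenable (G ⧸ U.normalCore) := by
  let conjOut : H →* (G ⧸ H → H ⧸ U.subgroupOf H) :=
    MonoidHom.pi fun q => (QuotientGroup.mk' _).comp (MulAut.conjNormal q.out⁻¹).toMonoidHom
  let toQuotient := (QuotientGroup.mk' U.normalCore).comp H.subtype
  have hker : conjOut.ker ≤ toQuotient.rangeRestrict.ker := by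
    intro h hh
    rw [MonoidHom.ker_rangeRestrict, MonoidHom.mem_ker]
    refine (QuotientGroup.eq_one_iff (h : G)).mpr <|
      Subgroup.mem_normalCore_of_forall_conj_out_mem h.2 fun q => ?_
    simpa [conjOut, QuotientGroup.eq_one_iff, Subgroup.mem_subgroupOf] using congr_fun hh q
  have : toQuotient.range.FiniteIndex := by
    rw [MonoidHom.range_comp, Subgroup.range_subtype, Subgroup.finiteIndex_iff]
    exact ne_zero_of_dvd_ne_zero Subgroup.FiniteIndex.index_ne_zero
      (H.index_map_dvd (QuotientGroup.mk'_surjective _))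
  exact .of_finiteIndex _ <|
    .of_ker_le_ker conjOut (.pi fun _ => hEA) _ toQuotient.rangeRestrict_surjective hker

/-- If `H` is a finite index normal subgroup of `G`, `U ≤ H` is normal in `H` with
`H/U` elementary amenable, then `G/U^G` is elementary amenable, where `U^G` is the
normal core of `U` in `G`. -/
theorem quotient_normalCore_elementaryAmenable (G : Type u) [Group G] (H : Subgroup G)
    [H.Normal] [H.FiniteIndex] (U : Subgroup G) (hUH : U ≤ H)
    [hU : (U.subgroupOf H).Normal]
    (hEA : ElementaryAmenable ((H : Type u) ⧸ U.subgroupOf H)) :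
    ElementaryAmenable (G ⧸ U.normalCore) :=
  quotient_normalCore_elementaryAmenable_general G H U (hU := hU) hEA
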